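/- Main theorem (combinatorial form): Let n ≥ 1, let h : ℤ × ℤ → ℤ vanish for p < 0 or p > 2n or q < 0 or q > 2n and satisfy h(p,q) = h(2n−p,q). Let K be a field, y ∈ K nonzero, t = y + y^{-1}, and let t_r be defined by t_0 = 0, t_1 = 1, t_{r+1} = t·t_r − t_{r−1} (with t_r = 0 for r < 0). Then Σ_{q=0}^{2n} Σ_{p=0}^{n} (−1)^{p+q} t_{n−p+1} (h(p,q) − h(p−2,q)) = y^{-n} · Σ_{p=0}^{2n} Σ_{q=0}^{2n} (−1)^{p+q} h(p,q) y^p. -/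

import Mathlib

/-!
With `t = y + y⁻¹` the recursion forces `T (r + 1) = y ^ r + y ^ (r - 2) + ⋯ + y ^ (-r)`, the
character of the `(r + 1)`-dimensional representation of `SL(2)`; in particular
`T (k + 1) - T (k - 1) = y ^ k + y ^ (-k)` for `k ≥ 1`.

Fix `q` and write `a p = h (p, q)`. Moving the shift `p ↦ p - 2` from `a` onto `T` (the boundary
terms vanish because `a` vanishes in negative degrees and `T 0 = T (-1) = 0`) turns the left side
into `∑_{p<n} (-1)^p a p (y^(n-p) + y^(p-n)) + (-1)^n a n`. Folding the range `0, …, 2n` of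
`y^(-n) χ_{-y}` at its middle `p = n` and using Serre duality `a (2n - p) = a p` gives the same
expression.
-/

open Finset

theorem Finset.sum_range_two_mul_add_one {M : Type*} [AddCommMonoid M] (f : ℕ → M) (n : ℕ) :
    ∑ p ∈ range (2 * n + 1), f p = ∑ p ∈ range n, (f p + f (2 * n - p)) + f n := by
  rw [show 2 * n + 1 = (n + 1) + n by omega, sum_range_add, sum_range_succ, sum_add_distrib,
    ← sum_range_reflect (fun i => f (n + 1 + i)) n]
  have hreflect : ∀ p ∈ range n, f (n + 1 + (n - 1 - p)) = f (2 * n - p) := fun p hp => by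
    rw [show n + 1 + (n - 1 - p) = 2 * n - p by have := mem_range.mp hp; omega]
  rw [sum_congr rfl hreflect]
  abel

theorem Finset.sum_range_mul_sub_shift_two {R : Type*} [CommRing R] (u : ℕ → R) (a : ℤ → R)
    (N : ℕ) (ha : ∀ p < 0, a p = 0) (hu : u N = 0) (hu' : u (N + 1) = 0) :
    ∑ p ∈ range N, u p * (a p - a (p - 2)) = ∑ p ∈ range N, a p * (u p - u (p + 2)) := by
  have hshift : ∑ p ∈ range N, u p * a (p - 2) = ∑ p ∈ range N, u (p + 2) * a p := by
    calc ∑ p ∈ range N, u p * a (p - 2) = ∑ p ∈ range (N + 2), u p * a (p - 2) := by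
          simp [sum_range_succ, hu, hu']
      _ = ∑ p ∈ range N, u (p + 2) * a p := by
          rw [sum_range_succ', sum_range_succ']
          simp [ha, add_assoc, one_add_one_eq_two]
  simp only [mul_sub, sum_sub_distrib, hshift, mul_comm]

theorem sub_eq_pow_add_inv_pow {K : Type*} [Field K] {y : K} (hy : y ≠ 0) {T : ℤ → K}
    (hT0 : T 0 = 0) (hT1 : T 1 = 1)
    (hrec : ∀ r : ℤ, 1 ≤ r → T (r + 1) = (y + y⁻¹) * T r - T (r - 1)) (k : ℕ) :
    T (k + 2) - T k = y ^ (k + 1) + y⁻¹ ^ (k + 1) := by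
  have hyy : y * y⁻¹ = 1 := mul_inv_cancel₀ hy
  have hT2 : T 2 = y + y⁻¹ := by simpa [hT0, hT1] using hrec 1 le_rfl
  induction k using Nat.twoStepInduction with
  | zero => simp [hT0, hT2]
  | one =>
    have hT3 : T 3 = (y + y⁻¹) * T 2 - T 1 := by simpa using hrec 2 (by norm_num)
    rw [show ((1 : ℕ) : ℤ) + 2 = 3 by norm_num, Nat.cast_one, hT3, hT2, hT1]
    linear_combination 2 * hyy
  | more k ih ih' =>
    have e4 := hrec (k + 3) (by omega)
    have e2 := hrec (k + 1) (by omega)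
    push_cast at ih ih' ⊢
    rw [show (k : ℤ) + 3 + 1 = k + 2 + 2 by ring, show (k : ℤ) + 3 - 1 = k + 2 by ring] at e4
    rw [show (k : ℤ) + 1 + 1 = k + 2 by ring, show (k : ℤ) + 1 - 1 = k by ring] at e2
    rw [show (k : ℤ) + 1 + 2 = k + 3 by ring] at ih'
    linear_combination e4 - e2 + (y + y⁻¹) * ih' - ih + (y ^ (k + 1) + y⁻¹ ^ (k + 1)) * hyy

section Row

variable {K : Type*} [Field K] (n : ℕ) (a : ℤ → K) {y : K}

theorem sum_neg_one_pow_mul_primitive_eq {T : ℤ → K} (hy : y ≠ 0) (ha : ∀ p < 0, a p = 0)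
    (hTneg : ∀ r ≤ 0, T r = 0) (hT1 : T 1 = 1)
    (hrec : ∀ r : ℤ, 1 ≤ r → T (r + 1) = (y + y⁻¹) * T r - T (r - 1)) :
    ∑ p ∈ range (n + 1), (-1 : K) ^ p * T ((n : ℤ) - p + 1) * (a p - a (p - 2)) =
      ∑ p ∈ range n, (-1 : K) ^ p * a p * (y ^ (n - p) + y⁻¹ ^ (n - p)) +
        (-1 : K) ^ n * a n := by
  have hterm : ∀ p ∈ range n,
      (-1 : K) ^ p * a p * (T ((n : ℤ) - p + 1) - T ((n : ℤ) - p - 1)) =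
      (-1 : K) ^ p * a p * (y ^ (n - p) + y⁻¹ ^ (n - p)) := fun p hp => by
    obtain ⟨k, rfl⟩ := Nat.exists_eq_add_of_lt (mem_range.mp hp)
    rw [show p + k + 1 - p = k + 1 by omega,
      ← sub_eq_pow_add_inv_pow hy (hTneg 0 le_rfl) hT1 hrec k]
    push_cast
    ring_nf
  rw [sum_range_mul_sub_shift_two (fun p => (-1 : K) ^ p * T ((n : ℤ) - p + 1)) a (n + 1) ha
      (by simp [hTneg]) (by simp [hTneg]), sum_range_succ, ← sum_congr rfl hterm]
  congr 1
  · exact sum_congr rfl fun p _ => by push_cast; ring_nf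
  · rw [sub_self, zero_add, hT1, show (n : ℤ) - (n + 2 : ℕ) + 1 = -1 by push_cast; ring,
      hTneg _ (by norm_num)]
    ring

theorem inv_pow_mul_sum_neg_one_pow_mul_pow_eq (hy : y ≠ 0)
    (hserre : ∀ p, a p = a (2 * n - p)) :
    y⁻¹ ^ n * ∑ p ∈ range (2 * n + 1), (-1 : K) ^ p * a p * y ^ p =
      ∑ p ∈ range n, (-1 : K) ^ p * a p * (y ^ (n - p) + y⁻¹ ^ (n - p)) +
        (-1 : K) ^ n * a n := by
  have hfold : ∀ p ∈ range n, y⁻¹ ^ n * ((-1 : K) ^ p * a p * y ^ p +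
      (-1 : K) ^ (2 * n - p) * a ↑(2 * n - p) * y ^ (2 * n - p)) =
      (-1 : K) ^ p * a p * (y ^ (n - p) + y⁻¹ ^ (n - p)) := fun p hp => by
    have hpn : p ≤ n := (mem_range.mp hp).le
    have hsign : (-1 : K) ^ (2 * n - p) = (-1) ^ p := by
      rw [show 2 * n - p = 2 * (n - p) + p by omega, pow_add, pow_mul, neg_one_sq, one_pow, one_mul]
    have hreflect : a ↑(2 * n - p) = a p := by rw [hserre p]; congr 1; omega
    have hlow : y⁻¹ ^ n * y ^ p = y⁻¹ ^ (n - p) := by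
      rw [inv_pow, inv_pow, pow_sub₀ y hy hpn, mul_inv, inv_inv]
    have hhigh : y⁻¹ ^ n * y ^ (2 * n - p) = y ^ (n - p) := by
      rw [show 2 * n - p = n + (n - p) by omega, pow_add, ← mul_assoc, inv_pow,
        inv_mul_cancel₀ (pow_ne_zero _ hy), one_mul]
    rw [hsign, hreflect]
    linear_combination ((-1 : K) ^ p * a p) * (hlow + hhigh)
  have hunit : y⁻¹ ^ n * y ^ n = 1 := by rw [← mul_pow, inv_mul_cancel₀ hy, one_pow]
  rw [sum_range_two_mul_add_one, mul_add, mul_sum, sum_congr rfl hfold]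
  linear_combination ((-1 : K) ^ n * a n) * hunit

end Row

open Finset in
theorem hyperkaehler_chi_y_supertrace_general {K : Type*} [Field K] (n : ℕ)
    (h : ℤ × ℤ → ℤ)
    (hvanish : ∀ p q : ℤ, (p < 0 ∨ 2 * n < p ∨ q < 0 ∨ 2 * n < q) → h (p, q) = 0)
    (hserre : ∀ p q : ℤ, h (p, q) = h (2 * n - p, q))
    (y : K) (hy : y ≠ 0) (t : K) (ht : t = y + y⁻¹)
    (T : ℤ → K) (hTneg : ∀ r : ℤ, r ≤ 0 → T r = 0) (hT1 : T 1 = 1)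
    (hrec : ∀ r : ℤ, 1 ≤ r → T (r + 1) = t * T r - T (r - 1)) :
    ∑ q ∈ range (2 * n + 1), ∑ p ∈ range (n + 1),
        (-1 : K) ^ (p + q) * T ((n : ℤ) - p + 1) * ((h (p, q) : K) - (h ((p : ℤ) - 2, q) : K)) =
    y ^ (-(n : ℤ)) *
      ∑ p ∈ range (2 * n + 1), ∑ q ∈ range (2 * n + 1),
        (-1 : K) ^ (p + q) * (h (p, q) : K) * y ^ (p : ℕ) := by
  subst ht
  conv_rhs => rw [sum_comm]
  rw [mul_sum, zpow_neg, zpow_natCast, ← inv_pow]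
  refine sum_congr rfl fun q _ => ?_
  let a : ℤ → K := fun p => h (p, q)
  have hrow : ∑ p ∈ range (n + 1), (-1 : K) ^ p * T ((n : ℤ) - p + 1) * (a p - a (p - 2)) =
      y⁻¹ ^ n * ∑ p ∈ range (2 * n + 1), (-1 : K) ^ p * a p * y ^ p := by
    rw [sum_neg_one_pow_mul_primitive_eq n a hy (fun p hp => by simp [a, hvanish p q (.inl hp)])
        hTneg hT1 hrec,
      inv_pow_mul_sum_neg_one_pow_mul_pow_eq n a hy fun p => by simp only [a, hserre p q]]
  simp only [a, mul_assoc] at hrow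
  simp only [pow_add, mul_comm _ ((-1 : K) ^ q), mul_assoc, ← mul_sum]
  rw [hrow, mul_left_comm]

open Finset in
theorem hyperkaehler_chi_y_supertrace {K : Type*} [Field K] (n : ℕ) (hn : 1 ≤ n)
    (h : ℤ × ℤ → ℤ)
    (hvanish : ∀ p q : ℤ, (p < 0 ∨ 2 * n < p ∨ q < 0 ∨ 2 * n < q) → h (p, q) = 0)
    (hserre : ∀ p q : ℤ, h (p, q) = h (2 * n - p, q))
    (y : K) (hy : y ≠ 0) (t : K) (ht : t = y + y⁻¹)
    (T : ℤ → K) (hTneg : ∀ r : ℤ, r ≤ 0 → T r = 0) (hT1 : T 1 = 1)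
    (hrec : ∀ r : ℤ, 1 ≤ r → T (r + 1) = t * T r - T (r - 1)) :
    ∑ q ∈ range (2 * n + 1), ∑ p ∈ range (n + 1),
        (-1 : K) ^ (p + q) * T ((n : ℤ) - p + 1) * ((h (p, q) : K) - (h ((p : ℤ) - 2, q) : K)) =
    y ^ (-(n : ℤ)) *
      ∑ p ∈ range (2 * n + 1), ∑ q ∈ range (2 * n + 1),
        (-1 : K) ^ (p + q) * (h (p, q) : K) * y ^ (p : ℕ) :=
  hyperkaehler_chi_y_supertrace_general n h hvanish hserre y hy t ht T hTneg hT1 hrec
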